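/- arXiv:2105.01184 — 2 statements merged into one kernel-verified Lean document; each statement's English description precedes it below -/
import Mathlib

section
/- Under 2^2 split-plot randomization, the covariance estimator V̂_ht is conservative in expectation: E[V̂_ht] − Cov(Ŷ_ht) = W^{-1}·S_ht, which is positive semi-definite. -/
open Finset Matrix Filter
open scoped Classical BigOperators

noncomputable section

namespace SplitPlotPaper

/-- The set of treatment combinations `T = {0,1} × {0,1}`, a pair of the levels of
factor A and factor B. -/
abbrev T : Type := Bool × Bool

section LS

variable {ι κ γ : Type*} [Fintype ι] [Fintype κ] [DecidableEq κ] [Fintype γ] [DecidableEq γ]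

/-- The Gram matrix `Dᵀ Π D` of a (weighted) least-squares problem with design matrix `X`
and weights `π`. -/
def gram (X : Matrix ι κ ℝ) (π : ι → ℝ) : Matrix κ κ ℝ :=
  Matrix.of fun k k' => ∑ i, π i * X i k * X i k'

/-- The (weighted) least-squares coefficient vector `(DᵀΠD)⁻¹ DᵀΠY`. -/
def lsCoef (X : Matrix ι κ ℝ) (π y : ι → ℝ) : κ → ℝ :=
  (gram X π)⁻¹.mulVec fun k => ∑ i, π i * X i k * y i

/-- Residuals of the (weighted) least-squares fit. -/
def lsResid (X : Matrix ι κ ℝ) (π y : ι → ℝ) (i : ι) : ℝ :=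
  y i - ∑ k, X i k * lsCoef X π y k

/-- The cluster-robust covariance matrix
`(DᵀΠD)⁻¹ (Σ_c D_cᵀΠ_c e_c e_cᵀ Π_c D_c) (DᵀΠD)⁻¹` for clustering map `c`. -/
def clusterCov (X : Matrix ι κ ℝ) (π y : ι → ℝ) (c : ι → γ) : Matrix κ κ ℝ :=
  (gram X π)⁻¹ *
    (Matrix.of fun k k' =>
      ∑ g : γ, (∑ i, if c i = g then π i * X i k * lsResid X π y i else 0) *
        (∑ i, if c i = g then π i * X i k' * lsResid X π y i else 0)) *
    (gram X π)⁻¹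

/-- The heteroskedasticity-robust (sandwich) covariance matrix. -/
def hcCov (X : Matrix ι κ ℝ) (π y : ι → ℝ) : Matrix κ κ ℝ :=
  (gram X π)⁻¹ *
    (Matrix.of fun k k' => ∑ i, (π i) ^ 2 * (lsResid X π y i) ^ 2 * X i k * X i k') *
    (gram X π)⁻¹

end LS

/-- A `2²` split-plot design: `W = W0 + W1` whole-plots, whole-plot `w` containing
`M w = M0 w + M1 w` sub-plots, together with fixed potential outcomes `Y`. -/
structure Design where
  W0 : ℕ
  W1 : ℕ
  hW0 : 2 ≤ W0
  hW1 : 2 ≤ W1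
  M0 : Fin (W0 + W1) → ℕ
  M1 : Fin (W0 + W1) → ℕ
  hM0 : ∀ w, 2 ≤ M0 w
  hM1 : ∀ w, 2 ≤ M1 w
  Y : (w : Fin (W0 + W1)) → Fin (M0 w + M1 w) → T → ℝ

namespace Design

variable (d : Design)

/-- Number of whole-plots. -/
abbrev W : ℕ := d.W0 + d.W1

/-- Size of whole-plot `w`. -/
abbrev M (w : Fin d.W) : ℕ := d.M0 w + d.M1 w

/-- Total number of units. -/
def N : ℕ := ∑ w, d.M w

/-- Number of whole-plots assigned level `a` of factor A. -/
def Wa (a : Bool) : ℕ := if a then d.W1 else d.W0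

/-- Number of units of whole-plot `w` assigned level `b` of factor B. -/
def Mb (w : Fin d.W) (b : Bool) : ℕ := if b then d.M1 w else d.M0 w

/-- `p_a = W_a / W`. -/
def p (a : Bool) : ℝ := (d.Wa a : ℝ) / (d.W : ℝ)

/-- `q_{wb} = M_{wb} / M_w`. -/
def q (w : Fin d.W) (b : Bool) : ℝ := (d.Mb w b : ℝ) / (d.M w : ℝ)

/-- Inclusion probability `p_{ws}(z) = p_a q_{wb}` for `z = (a,b)`. -/
def prob (w : Fin d.W) (z : T) : ℝ := d.p z.1 * d.q w z.2

/-- Whole-plot size factor `α_w = W M_w / N`. -/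
def alpha (w : Fin d.W) : ℝ := (d.W : ℝ) * (d.M w : ℝ) / (d.N : ℝ)

/-- An assignment: a level of factor A for each whole-plot and a level of factor B
for each unit. -/
abbrev Assign : Type := (Fin d.W → Bool) × ((w : Fin d.W) → Fin (d.M w) → Bool)

/-- The set of assignments realizable under split-plot randomization: exactly `W1`
whole-plots receive level 1 of factor A, and exactly `M1 w` units of whole-plot `w`
receive level 1 of factor B.  Split-plot randomization is uniform on this set. -/
def Ω : Finset d.Assign :=
  Finset.univ.filter fun ω =>
    ((Finset.univ.filter fun w => ω.1 w = true).card = d.W1) ∧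
    (∀ w, (Finset.univ.filter fun s => ω.2 w s = true).card = d.M1 w)

/-- Design-based expectation: average over the uniform distribution on `Ω`. -/
def expect (f : d.Assign → ℝ) : ℝ := (∑ ω ∈ d.Ω, f ω) / (d.Ω.card : ℝ)

/-- Design-based covariance. -/
def cov (f g : d.Assign → ℝ) : ℝ :=
  d.expect (fun ω => f ω * g ω) - d.expect f * d.expect g

/-- Conditional expectation given an event `E` on assignments. -/
def cexpect (E : d.Assign → Prop) (f : d.Assign → ℝ) : ℝ :=
  (∑ ω ∈ d.Ω.filter E, f ω) / ((d.Ω.filter E).card : ℝ)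

/-- Conditional covariance given an event `E` on assignments. -/
def ccov (E : d.Assign → Prop) (f g : d.Assign → ℝ) : ℝ :=
  d.cexpect E (fun ω => f ω * g ω) - d.cexpect E f * d.cexpect E g

/-- Treatment `Z_{ws} = (A_w, B_{ws})` received by unit `(w,s)`. -/
def Z (ω : d.Assign) (w : Fin d.W) (s : Fin (d.M w)) : T := (ω.1 w, ω.2 w s)

/-- Observed outcome `Y_{ws} = Y_{ws}(Z_{ws})`. -/
def Yobs (ω : d.Assign) (w : Fin d.W) (s : Fin (d.M w)) : ℝ := d.Y w s (d.Z ω w s)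

/-- Horvitz–Thompson estimator `Ŷ_ht(z)`. -/
def Yht (ω : d.Assign) (z : T) : ℝ :=
  (d.N : ℝ)⁻¹ * ∑ w, ∑ s, if d.Z ω w s = z then (d.prob w z)⁻¹ * d.Yobs ω w s else 0

/-- `1̂_ht(z)`: the Horvitz–Thompson estimator of the constant 1. -/
def oneHt (ω : d.Assign) (z : T) : ℝ :=
  (d.N : ℝ)⁻¹ * ∑ w, ∑ s, if d.Z ω w s = z then (d.prob w z)⁻¹ else 0

/-- Hajek estimator `Ŷ_haj(z) = Ŷ_ht(z)/1̂_ht(z)`. -/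
def Yhaj (ω : d.Assign) (z : T) : ℝ := d.Yht ω z / d.oneHt ω z

/-- Sample-mean estimator `Ŷ_sm(z)`. -/
def Ysm (ω : d.Assign) (z : T) : ℝ :=
  (∑ w, ∑ s, if d.Z ω w s = z then d.Yobs ω w s else 0) /
    (∑ w, ∑ s, if d.Z ω w s = z then (1 : ℝ) else 0)

/-- Whole-plot sample mean `Ŷ_w(z)` (zero when whole-plot `w` has no units under `z`). -/
def Yw (ω : d.Assign) (w : Fin d.W) (z : T) : ℝ :=
  (d.Mb w z.2 : ℝ)⁻¹ * ∑ s, if d.Z ω w s = z then d.Yobs ω w s else 0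

/-- Scaled whole-plot sample mean `Û_w(z) = α_w Ŷ_w(z)`. -/
def Uw (ω : d.Assign) (w : Fin d.W) (z : T) : ℝ := d.alpha w * d.Yw ω w z

/-- Finite-population average `Ȳ(z)`. -/
def Ybar (z : T) : ℝ := (d.N : ℝ)⁻¹ * ∑ w, ∑ s, d.Y w s z

/-- Whole-plot average potential outcome `Ȳ_w(z)`. -/
def Ybarw (w : Fin d.W) (z : T) : ℝ := (d.M w : ℝ)⁻¹ * ∑ s, d.Y w s z

/-- Scaled whole-plot total `U_w(z) = α_w Ȳ_w(z)`. -/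
def U (w : Fin d.W) (z : T) : ℝ := d.alpha w * d.Ybarw w z

/-- Between whole-plot covariance `S_ht(z,z')`. -/
def Sht (z z' : T) : ℝ :=
  ((d.W : ℝ) - 1)⁻¹ *
    ∑ w, (d.alpha w * d.Ybarw w z - d.Ybar z) * (d.alpha w * d.Ybarw w z' - d.Ybar z')

/-- Between whole-plot covariance `S_haj(z,z')`. -/
def Shaj (z z' : T) : ℝ :=
  ((d.W : ℝ) - 1)⁻¹ *
    ∑ w, (d.alpha w) ^ 2 * (d.Ybarw w z - d.Ybar z) * (d.Ybarw w z' - d.Ybar z')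

/-- Within whole-plot covariance `S_w(z,z')`. -/
def Sw (w : Fin d.W) (z z' : T) : ℝ :=
  ((d.M w : ℝ) - 1)⁻¹ * (d.alpha w) ^ 2 *
    ∑ s, (d.Y w s z - d.Ybarw w z) * (d.Y w s z' - d.Ybarw w z')

/-- Entry `(z,z')` of `H = diag(p₀⁻¹,p₁⁻¹) ⊗ J₂ − J₄`. -/
def Hmat (z z' : T) : ℝ := (if z.1 = z'.1 then (d.p z.1)⁻¹ else 0) - 1

/-- Entry `(z,z')` of `H_w = diag(p₀⁻¹,p₁⁻¹) ⊗ (diag(q_{w0}⁻¹,q_{w1}⁻¹) − J₂)`,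
i.e. `1(a=a')·p_a⁻¹·(q_{wb}⁻¹·1(z=z') − 1)`. -/
def Hw (w : Fin d.W) (z z' : T) : ℝ :=
  if z.1 = z'.1 then (d.p z.1)⁻¹ * ((if z = z' then (d.q w z.2)⁻¹ else 0) - 1) else 0

/-- `Ψ(z,z') = W⁻¹ Σ_w M_w⁻¹ H_w(z,z') S_w(z,z')`. -/
def Psi (z z' : T) : ℝ := (d.W : ℝ)⁻¹ * ∑ w, (d.M w : ℝ)⁻¹ * d.Hw w z z' * d.Sw w z z'

/-- Sample analog `Ŝ_ht(z,z')` (for `z,z'` sharing the same A-level `z.1`). -/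
def ShtHat (ω : d.Assign) (z z' : T) : ℝ :=
  ((d.Wa z.1 : ℝ) - 1)⁻¹ *
    ∑ w, if ω.1 w = z.1 then
        (d.alpha w * d.Yw ω w z - d.Yht ω z) * (d.alpha w * d.Yw ω w z' - d.Yht ω z')
      else 0

/-- Sample analog `Ŝ_haj(z,z')` (for `z,z'` sharing the same A-level `z.1`). -/
def ShajHat (ω : d.Assign) (z z' : T) : ℝ :=
  ((d.Wa z.1 : ℝ) - 1)⁻¹ *
    ∑ w, if ω.1 w = z.1 then
        (d.alpha w) ^ 2 * (d.Yw ω w z - d.Yhaj ω z) * (d.Yw ω w z' - d.Yhaj ω z')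
      else 0

/-- Covariance estimator `V̂_ht` (block-diagonal in the A-levels). -/
def Vht (ω : d.Assign) : Matrix T T ℝ :=
  Matrix.of fun z z' => if z.1 = z'.1 then (d.Wa z.1 : ℝ)⁻¹ * d.ShtHat ω z z' else 0

/-- Covariance estimator `V̂_haj` (block-diagonal in the A-levels). -/
def Vhaj (ω : d.Assign) : Matrix T T ℝ :=
  Matrix.of fun z z' => if z.1 = z'.1 then (d.Wa z.1 : ℝ)⁻¹ * d.ShajHat ω z z' else 0

/-- Index set of units. -/
abbrev Idx : Type := (w : Fin d.W) × Fin (d.M w)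

/-- Design matrix of the unit regression on the four treatment indicators. -/
def Dunit (ω : d.Assign) : Matrix d.Idx T ℝ :=
  Matrix.of fun i z => if d.Z ω i.1 i.2 = z then 1 else 0

/-- Observed outcome vector, indexed by units. -/
def Yv (ω : d.Assign) : d.Idx → ℝ := fun i => d.Yobs ω i.1 i.2

/-- Inverse-probability weights `p_{ws}(Z_{ws})⁻¹`. -/
def wgt (ω : d.Assign) : d.Idx → ℝ := fun i => (d.prob i.1 (d.Z ω i.1 i.2))⁻¹

/-- Index set of the aggregate regression: pairs `(w,b)`. -/
abbrev AgIdx : Type := Fin d.W × Bool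

/-- Design matrix of the aggregate regression on the four treatment indicators. -/
def Dag (ω : d.Assign) : Matrix d.AgIdx T ℝ :=
  Matrix.of fun i z => if (ω.1 i.1, i.2) = z then 1 else 0

/-- Outcome vector of the aggregate regression: `Û_w((A_w, b))`. -/
def Uag (ω : d.Assign) : d.AgIdx → ℝ := fun i => d.Uw ω i.1 (ω.1 i.1, i.2)

/-- Clustering of units by whole-plot. -/
def clUnit : d.Idx → Fin d.W := fun i => i.1

/-- Clustering of aggregate observations by whole-plot. -/
def clAg : d.AgIdx → Fin d.W := fun i => i.1

/-- OLS coefficients `β_ols` of the unit regression. -/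
def betaOls (ω : d.Assign) : T → ℝ := lsCoef (d.Dunit ω) (fun _ => 1) (d.Yv ω)

/-- WLS coefficients `β_wls` of the unit regression with inverse probability weights. -/
def betaWls (ω : d.Assign) : T → ℝ := lsCoef (d.Dunit ω) (d.wgt ω) (d.Yv ω)

/-- OLS coefficients `β_ag` of the aggregate regression. -/
def betaAg (ω : d.Assign) : T → ℝ := lsCoef (d.Dag ω) (fun _ => 1) (d.Uag ω)

/-- Cluster-robust covariance `Ṽ_ols` of the unweighted unit regression. -/
def Vols (ω : d.Assign) : Matrix T T ℝ :=
  clusterCov (d.Dunit ω) (fun _ => 1) (d.Yv ω) d.clUnit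

/-- Cluster-robust covariance `Ṽ_wls` of the weighted unit regression. -/
def Vwls (ω : d.Assign) : Matrix T T ℝ :=
  clusterCov (d.Dunit ω) (d.wgt ω) (d.Yv ω) d.clUnit

/-- Cluster-robust covariance `Ṽ_ag` of the aggregate regression. -/
def VagCR (ω : d.Assign) : Matrix T T ℝ :=
  clusterCov (d.Dag ω) (fun _ => 1) (d.Uag ω) d.clAg

section Covariates

variable {J : ℕ}

/-- Horvitz–Thompson estimator of the covariate means. -/
def xht (x : (w : Fin d.W) → Fin (d.M w) → Fin J → ℝ) (ω : d.Assign) (z : T) (j : Fin J) : ℝ :=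
  (d.N : ℝ)⁻¹ * ∑ w, ∑ s, if d.Z ω w s = z then (d.prob w z)⁻¹ * x w s j else 0

/-- Hajek estimator of the covariate means. -/
def xhaj (x : (w : Fin d.W) → Fin (d.M w) → Fin J → ℝ) (ω : d.Assign) (z : T) (j : Fin J) : ℝ :=
  d.xht x ω z j / d.oneHt ω z

/-- Sample-mean estimator of the covariate means. -/
def xsm (x : (w : Fin d.W) → Fin (d.M w) → Fin J → ℝ) (ω : d.Assign) (z : T) (j : Fin J) : ℝ :=
  (∑ w, ∑ s, if d.Z ω w s = z then x w s j else 0) /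
    (∑ w, ∑ s, if d.Z ω w s = z then (1 : ℝ) else 0)

/-- Whole-plot sample mean of the covariates `x̂_w(z)`. -/
def xw (x : (w : Fin d.W) → Fin (d.M w) → Fin J → ℝ) (ω : d.Assign) (w : Fin d.W) (z : T)
    (j : Fin J) : ℝ :=
  (d.Mb w z.2 : ℝ)⁻¹ * ∑ s, if d.Z ω w s = z then x w s j else 0

/-- Scaled whole-plot covariate total `v̂_w(z) = α_w x̂_w(z)`. -/
def vw (x : (w : Fin d.W) → Fin (d.M w) → Fin J → ℝ) (ω : d.Assign) (w : Fin d.W) (z : T)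
    (j : Fin J) : ℝ :=
  d.alpha w * d.xw x ω w z j

/-- Design matrix of the additive covariate-adjusted unit regression. -/
def DunitF (x : (w : Fin d.W) → Fin (d.M w) → Fin J → ℝ) (ω : d.Assign) :
    Matrix d.Idx (T ⊕ Fin J) ℝ :=
  Matrix.of fun i k =>
    Sum.elim (fun z => if d.Z ω i.1 i.2 = z then (1 : ℝ) else 0) (fun j => x i.1 i.2 j) k

/-- Design matrix of the additive covariate-adjusted aggregate regression. -/
def DagF (x : (w : Fin d.W) → Fin (d.M w) → Fin J → ℝ) (ω : d.Assign) :
    Matrix d.AgIdx (T ⊕ Fin J) ℝ :=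
  Matrix.of fun i k =>
    Sum.elim (fun z => if (ω.1 i.1, i.2) = z then (1 : ℝ) else 0)
      (fun j => d.vw x ω i.1 (ω.1 i.1, i.2) j) k

/-- Design matrix of the fully-interacted covariate-adjusted unit regression. -/
def DunitL (x : (w : Fin d.W) → Fin (d.M w) → Fin J → ℝ) (ω : d.Assign) :
    Matrix d.Idx (T ⊕ T × Fin J) ℝ :=
  Matrix.of fun i k =>
    Sum.elim (fun z => if d.Z ω i.1 i.2 = z then (1 : ℝ) else 0)
      (fun zj => if d.Z ω i.1 i.2 = zj.1 then x i.1 i.2 zj.2 else 0) k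

/-- Design matrix of the fully-interacted covariate-adjusted aggregate regression. -/
def DagL (x : (w : Fin d.W) → Fin (d.M w) → Fin J → ℝ) (ω : d.Assign) :
    Matrix d.AgIdx (T ⊕ T × Fin J) ℝ :=
  Matrix.of fun i k =>
    Sum.elim (fun z => if (ω.1 i.1, i.2) = z then (1 : ℝ) else 0)
      (fun zj => if (ω.1 i.1, i.2) = zj.1 then d.vw x ω i.1 (ω.1 i.1, i.2) zj.2 else 0) k

end Covariates

/-- Centered factor-A indicator `A_w − 1/2`. -/
def Ac (ω : d.Assign) (w : Fin d.W) : ℝ := (if ω.1 w then 1 else 0) - 1 / 2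

/-- Centered factor-B indicator `B_{ws} − 1/2`. -/
def Bcu (ω : d.Assign) (i : d.Idx) : ℝ := (if ω.2 i.1 i.2 then 1 else 0) - 1 / 2

/-- Design matrix of the factor-based unit regression
`Y ~ 1 + (A−1/2) + (B−1/2) + (A−1/2)(B−1/2)`. -/
def Funit (ω : d.Assign) : Matrix d.Idx (Fin 4) ℝ :=
  Matrix.of fun i => ![1, d.Ac ω i.1, d.Bcu ω i, d.Ac ω i.1 * d.Bcu ω i]

/-- Design matrix of the factor-based aggregate regression
`Û ~ 1 + (A−1/2) + (b−1/2) + (A−1/2)(b−1/2)`. -/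
def Fag (ω : d.Assign) : Matrix d.AgIdx (Fin 4) ℝ :=
  Matrix.of fun i =>
    ![1, d.Ac ω i.1, (if i.2 then 1 else 0) - 1 / 2,
      d.Ac ω i.1 * ((if i.2 then 1 else 0) - 1 / 2)]

end Design

/-- The contrast matrix `G₀` with rows `g_A`, `g_B`, `g_AB`. -/
def G0 : Matrix (Fin 3) T ℝ :=
  Matrix.of fun k z =>
    ![(if z.1 then (1 : ℝ) else -1) / 2,
      (if z.2 then (1 : ℝ) else -1) / 2,
      (if z.1 then (-1 : ℝ) else 1) * (if z.2 then (-1 : ℝ) else 1)] k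

/-!
Stage (II) enters only through the whole-plot estimates `Û_w(z) = 1(A_w = a) · α_w Ŷ_w(z)`:
`Ŷ_ht(z) = W_a⁻¹ Σ_w Û_w(z)`, and the factors `α_w Ŷ_w(z)` are independent across whole-plots
with stage-(II) means `U_w(z) = α_w Ȳ_w(z)`. Stage (I) is a complete randomization, so by
exchangeability `P(A_w = a) = W_a / W` and, for `w ≠ w'`,
`P(A_w = a, A_w' = a') = W_a (W_a' - 1(a = a')) / (W (W - 1))`. Expanding `E[Ŷ_ht(z) Ŷ_ht(z')]`
and `E[V̂_ht]` in these moments, the diagonal terms `E[Û_w(z) Û_w(z')]`, which carry all the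
within-whole-plot variation, cancel from `E[V̂_ht] - Cov(Ŷ_ht)`. What remains is `W⁻¹ S_ht`,
a multiple of the Gram matrix of the centred vectors `α_w Ȳ_w - Ȳ`.
-/

lemma sum_sum_erase_mul {ι R : Type*} [Fintype ι] [DecidableEq ι] [CommRing R] (f g : ι → R) :
    ∑ i, ∑ j ∈ univ.erase i, f i * g j = (∑ i, f i) * (∑ i, g i) - ∑ i, f i * g i := by
  simp only [← mul_sum, sum_erase_eq_sub (mem_univ _), sum_sub_distrib, sum_mul]

section Exchangeable

variable {ι κ K : Type*} [Field K] [CharZero K] {S : Finset (ι → κ)}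

lemma expect_comp_perm (hS : ∀ σ : Equiv.Perm ι, ∀ f ∈ S, f ∘ σ ∈ S) (σ : Equiv.Perm ι)
    (F : (ι → κ) → K) : 𝔼 f ∈ S, F (f ∘ σ) = 𝔼 f ∈ S, F f :=
  expect_nbij' (· ∘ σ) (· ∘ σ.symm) (fun f hf => hS σ f hf) (fun f hf => hS σ.symm f hf)
    (fun f _ => by ext; simp) (fun f _ => by ext; simp) (fun _ _ => rfl)

variable [Fintype ι] [DecidableEq ι]

lemma expect_apply_eq_div_card (hS : ∀ σ : Equiv.Perm ι, ∀ f ∈ S, f ∘ σ ∈ S)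
    (hS₀ : S.Nonempty) {g : κ → K} {c : K} (hc : ∀ f ∈ S, ∑ k, g (f k) = c) (i : ι) :
    𝔼 f ∈ S, g (f i) = c / Fintype.card ι := by
  have hswap : ∀ k, 𝔼 f ∈ S, g (f k) = 𝔼 f ∈ S, g (f i) := fun k => by
    simpa using expect_comp_perm hS (Equiv.swap i k) (fun f => g (f i))
  have : Nonempty ι := ⟨i⟩
  calc 𝔼 f ∈ S, g (f i) = 𝔼 k, 𝔼 f ∈ S, g (f k) := by simp [hswap]
    _ = 𝔼 f ∈ S, 𝔼 k, g (f k) := expect_comm _ _ _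
    _ = 𝔼 f ∈ S, c / Fintype.card ι :=
        expect_congr rfl fun f hf => by rw [Fintype.expect_eq_sum_div_card, hc f hf]
    _ = c / Fintype.card ι := expect_const hS₀ _

lemma expect_apply_mul_apply_of_ne (hS : ∀ σ : Equiv.Perm ι, ∀ f ∈ S, f ∘ σ ∈ S)
    (hS₀ : S.Nonempty) {g₁ g₂ : κ → K} {c₁ c₂ c₁₂ : K} (hc₁ : ∀ f ∈ S, ∑ k, g₁ (f k) = c₁)
    (hc₂ : ∀ f ∈ S, ∑ k, g₂ (f k) = c₂) (hc₁₂ : ∀ f ∈ S, ∑ k, g₁ (f k) * g₂ (f k) = c₁₂)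
    {i j : ι} (hij : i ≠ j) :
    𝔼 f ∈ S, g₁ (f i) * g₂ (f j) =
      (c₁ * c₂ - c₁₂) / (Fintype.card ι * (Fintype.card ι - 1)) := by
  -- a transposition fixing `i` moves `j` to any other `k ≠ i`
  have hswap : ∀ k ∈ univ.erase i,
      𝔼 f ∈ S, g₁ (f i) * g₂ (f k) = 𝔼 f ∈ S, g₁ (f i) * g₂ (f j) := fun k hk => by
    simpa [Equiv.swap_apply_of_ne_of_ne hij (ne_of_mem_erase hk).symm] using
      expect_comp_perm hS (Equiv.swap j k) (fun f => g₁ (f i) * g₂ (f j))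
  have : Nonempty ι := ⟨i⟩
  have hn₁ : (Fintype.card ι : K) - 1 ≠ 0 := sub_ne_zero.mpr <| by
    exact_mod_cast (Fintype.one_lt_card_iff.mpr ⟨i, j, hij⟩).ne'
  have hn₀ : (Fintype.card ι : K) ≠ 0 := Nat.cast_ne_zero.mpr Fintype.card_ne_zero
  have key : ((Fintype.card ι : K) - 1) * 𝔼 f ∈ S, g₁ (f i) * g₂ (f j) =
      (c₁ * c₂ - c₁₂) / Fintype.card ι :=
    calc ((Fintype.card ι : K) - 1) * 𝔼 f ∈ S, g₁ (f i) * g₂ (f j)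
        = ∑ k ∈ univ.erase i, 𝔼 f ∈ S, g₁ (f i) * g₂ (f k) := by
          rw [sum_congr rfl hswap, sum_const, card_erase_of_mem (mem_univ i), card_univ,
            nsmul_eq_mul, Nat.cast_sub Fintype.card_pos, Nat.cast_one]
      _ = 𝔼 f ∈ S, (c₂ * g₁ (f i) - g₁ (f i) * g₂ (f i)) := by
          rw [← expect_sum_comm]
          refine expect_congr rfl fun f hf => ?_
          rw [← mul_sum, sum_erase_eq_sub (mem_univ i), hc₂ f hf]
          ring
      _ = (c₁ * c₂ - c₁₂) / Fintype.card ι := by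
          rw [expect_sub_distrib, ← mul_expect, expect_apply_eq_div_card hS hS₀ hc₁,
            expect_apply_eq_div_card (g := fun x => g₁ x * g₂ x) hS hS₀ hc₁₂]
          ring
  field_simp at key ⊢
  linear_combination key

end Exchangeable

section Independent

variable {ι K : Type*} [Fintype ι] [DecidableEq ι] [Field K] [CharZero K] {κ : ι → Type*}

lemma expect_piFinset_prod (t : ∀ i, Finset (κ i)) (f : ∀ i, κ i → K) :
    𝔼 x ∈ Fintype.piFinset t, ∏ i, f i (x i) = ∏ i, 𝔼 y ∈ t i, f i y := by
  simp only [expect_eq_sum_div_card, ← prod_univ_sum, Fintype.card_piFinset, Nat.cast_prod,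
    prod_div_distrib]

lemma expect_piFinset_apply {t : ∀ i, Finset (κ i)} (ht : ∀ i, (t i).Nonempty) (i : ι)
    (g : κ i → K) : 𝔼 x ∈ Fintype.piFinset t, g (x i) = 𝔼 y ∈ t i, g y :=
  calc 𝔼 x ∈ Fintype.piFinset t, g (x i)
      = 𝔼 x ∈ Fintype.piFinset t, ∏ k, Pi.mulSingle (M := fun k => κ k → K) i g k (x k) :=
        expect_congr rfl fun x _ => by
          rw [Fintype.prod_eq_single i fun k hk => by simp [hk]]
          simp
    _ = ∏ k, 𝔼 y ∈ t k, Pi.mulSingle (M := fun k => κ k → K) i g k y := expect_piFinset_prod t _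
    _ = 𝔼 y ∈ t i, g y := by
        rw [Fintype.prod_eq_single i fun k hk => by simpa [hk] using expect_const (ht k) (1 : K)]
        simp

lemma expect_piFinset_apply_mul_apply {t : ∀ i, Finset (κ i)} (ht : ∀ i, (t i).Nonempty)
    {i j : ι} (hij : i ≠ j) (g₁ : κ i → K) (g₂ : κ j → K) :
    𝔼 x ∈ Fintype.piFinset t, g₁ (x i) * g₂ (x j) = (𝔼 y ∈ t i, g₁ y) * 𝔼 y ∈ t j, g₂ y := by
  set F := Pi.mulSingle (M := fun k => κ k → K) i g₁ * Pi.mulSingle (M := fun k => κ k → K) j g₂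
  calc 𝔼 x ∈ Fintype.piFinset t, g₁ (x i) * g₂ (x j)
      = 𝔼 x ∈ Fintype.piFinset t, ∏ k, F k (x k) :=
        expect_congr rfl fun x _ => by
          rw [Fintype.prod_eq_mul i j hij fun k hk => by simp [F, hk.1, hk.2]]
          simp [F, hij, hij.symm]
    _ = ∏ k, 𝔼 y ∈ t k, F k y := expect_piFinset_prod t _
    _ = (𝔼 y ∈ t i, g₁ y) * 𝔼 y ∈ t j, g₂ y := by
        rw [Fintype.prod_eq_mul i j hij fun k hk => by
          simpa [F, hk.1, hk.2] using expect_const (ht k) (1 : K)]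
        simp [F, hij, hij.symm]

end Independent

def completeRandomization (ι : Type*) [Fintype ι] (n : ℕ) : Finset (ι → Bool) :=
  univ.filter fun f => #{i | f i = true} = n

section CompleteRandomization

variable {ι : Type*} [Fintype ι] {n : ℕ}

lemma mem_completeRandomization {f : ι → Bool} :
    f ∈ completeRandomization ι n ↔ #{i | f i = true} = n := by
  simp [completeRandomization]

lemma comp_perm_mem_completeRandomization {f : ι → Bool} (hf : f ∈ completeRandomization ι n)
    (σ : Equiv.Perm ι) : f ∘ σ ∈ completeRandomization ι n := by
  rw [mem_completeRandomization] at hf ⊢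
  rw [← hf]
  exact card_nbij' σ σ.symm (fun x hx => by simpa using hx) (fun x hx => by simpa using hx)
    (fun x _ => by simp) (fun x _ => by simp)

lemma completeRandomization_nonempty (hn : n ≤ Fintype.card ι) :
    (completeRandomization ι n).Nonempty := by
  obtain ⟨s, -, hs⟩ := exists_subset_card_eq (s := (univ : Finset ι)) (by simpa using hn)
  exact ⟨fun i => decide (i ∈ s), by simpa [mem_completeRandomization] using hs⟩

lemma card_filter_eq_false_of_mem_completeRandomization {f : ι → Bool}
    (hf : f ∈ completeRandomization ι n) : #{i | f i = false} = Fintype.card ι - n := by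
  rw [mem_completeRandomization] at hf
  have := card_filter_add_card_filter_not (s := univ) (fun i => f i = true)
  simp only [Bool.not_eq_true, card_univ] at this
  omega

end CompleteRandomization

namespace Design

variable (d : Design)

lemma two_le_W : 2 ≤ d.W := le_add_right d.hW0

lemma two_le_Wa (a : Bool) : 2 ≤ d.Wa a := by
  cases a <;> simp [Design.Wa, d.hW0, d.hW1]

lemma W_ne_zero : (d.W : ℝ) ≠ 0 := by
  have := d.two_le_W
  positivity

lemma W_sub_one_ne_zero : (d.W : ℝ) - 1 ≠ 0 := by
  have : (2 : ℝ) ≤ d.W := by exact_mod_cast d.two_le_W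
  linarith

lemma Wa_ne_zero (a : Bool) : (d.Wa a : ℝ) ≠ 0 := by
  have := d.two_le_Wa a
  positivity

lemma Wa_sub_one_ne_zero (a : Bool) : (d.Wa a : ℝ) - 1 ≠ 0 := by
  have : (2 : ℝ) ≤ d.Wa a := by exact_mod_cast d.two_le_Wa a
  linarith

lemma M_pos (w : Fin d.W) : 0 < d.M w := Nat.add_pos_left (by have := d.hM0 w; omega) _

lemma Mb_ne_zero (w : Fin d.W) (b : Bool) : (d.Mb w b : ℝ) ≠ 0 := by
  have := d.hM0 w
  have := d.hM1 w
  cases b <;> simp [Design.Mb] <;> omega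

lemma N_ne_zero : (d.N : ℝ) ≠ 0 := by
  have : Nonempty (Fin d.W) := ⟨⟨0, by have := d.two_le_W; omega⟩⟩
  exact Nat.cast_ne_zero.mpr (sum_pos (fun w _ => d.M_pos w) univ_nonempty).ne'

abbrev wholePlotAssignments : Finset (Fin d.W → Bool) := completeRandomization (Fin d.W) d.W1

abbrev subPlotAssignments (w : Fin d.W) : Finset (Fin (d.M w) → Bool) :=
  completeRandomization (Fin (d.M w)) (d.M1 w)

lemma Ω_eq : d.Ω = d.wholePlotAssignments ×ˢ Fintype.piFinset d.subPlotAssignments := by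
  ext ω
  simp [Design.Ω, mem_completeRandomization, Fintype.mem_piFinset]

lemma expect_eq_finset_expect (f : d.Assign → ℝ) : d.expect f = 𝔼 ω ∈ d.Ω, f ω :=
  (expect_eq_sum_div_card _ _).symm

lemma wholePlotAssignments_nonempty : d.wholePlotAssignments.Nonempty :=
  completeRandomization_nonempty (by simp)

lemma subPlotAssignments_nonempty (w : Fin d.W) : (d.subPlotAssignments w).Nonempty :=
  completeRandomization_nonempty (by simp)

lemma sum_ite_eq_Wa {α : Fin d.W → Bool} (hα : α ∈ d.wholePlotAssignments) (a : Bool) :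
    ∑ w, (if α w = a then (1 : ℝ) else 0) = d.Wa a := by
  rw [sum_boole]
  cases a
  · simp [card_filter_eq_false_of_mem_completeRandomization hα, Design.Wa]
  · simp [mem_completeRandomization.mp hα, Design.Wa]

lemma sum_ite_eq_Mb (w : Fin d.W) {β : Fin (d.M w) → Bool} (hβ : β ∈ d.subPlotAssignments w)
    (b : Bool) : ∑ s, (if β s = b then (1 : ℝ) else 0) = d.Mb w b := by
  rw [sum_boole]
  cases b
  · simp [card_filter_eq_false_of_mem_completeRandomization hβ, Design.Mb]
  · simp [mem_completeRandomization.mp hβ, Design.Mb]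

lemma expect_Ω_mul (g : (Fin d.W → Bool) → ℝ) (w : Fin d.W) (h : (Fin (d.M w) → Bool) → ℝ) :
    𝔼 ω ∈ d.Ω, g ω.1 * h (ω.2 w) =
      (𝔼 α ∈ d.wholePlotAssignments, g α) * 𝔼 β ∈ d.subPlotAssignments w, h β := by
  rw [Ω_eq, expect_product, expect_mul]
  refine expect_congr rfl fun α _ => ?_
  dsimp only
  rw [← mul_expect, expect_piFinset_apply d.subPlotAssignments_nonempty]

lemma expect_Ω_mul_mul (g : (Fin d.W → Bool) → ℝ) {w w' : Fin d.W} (hww : w ≠ w')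
    (h : (Fin (d.M w) → Bool) → ℝ) (h' : (Fin (d.M w') → Bool) → ℝ) :
    𝔼 ω ∈ d.Ω, g ω.1 * (h (ω.2 w) * h' (ω.2 w')) =
      (𝔼 α ∈ d.wholePlotAssignments, g α) *
        ((𝔼 β ∈ d.subPlotAssignments w, h β) * 𝔼 β ∈ d.subPlotAssignments w', h' β) := by
  rw [Ω_eq, expect_product, expect_mul]
  refine expect_congr rfl fun α _ => ?_
  dsimp only
  rw [← mul_expect, expect_piFinset_apply_mul_apply d.subPlotAssignments_nonempty hww]

lemma expect_wholePlotAssignments_ite (w : Fin d.W) (a : Bool) :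
    𝔼 α ∈ d.wholePlotAssignments, (if α w = a then (1 : ℝ) else 0) = d.p a := by
  rw [expect_apply_eq_div_card (g := fun b => if b = a then (1 : ℝ) else 0)
    (fun σ _ hα => comp_perm_mem_completeRandomization hα σ) d.wholePlotAssignments_nonempty
    (fun _ hα => d.sum_ite_eq_Wa hα a) w, Fintype.card_fin, Design.p]

/-- Probability that two given distinct whole-plots receive A-levels `a` and `a'`. -/
def pairProb (a a' : Bool) : ℝ :=
  (d.Wa a * d.Wa a' - if a = a' then (d.Wa a : ℝ) else 0) / (d.W * (d.W - 1))

lemma expect_wholePlotAssignments_ite_mul_ite {w w' : Fin d.W} (hww : w ≠ w') (a a' : Bool) :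
    𝔼 α ∈ d.wholePlotAssignments, (if α w = a then (1 : ℝ) else 0) * (if α w' = a' then 1 else 0)
      = d.pairProb a a' := by
  rw [expect_apply_mul_apply_of_ne (g₁ := fun b => if b = a then (1 : ℝ) else 0)
    (g₂ := fun b => if b = a' then (1 : ℝ) else 0)
    (fun σ _ hα => comp_perm_mem_completeRandomization hα σ) d.wholePlotAssignments_nonempty
    (fun _ hα => d.sum_ite_eq_Wa hα a) (fun _ hα => d.sum_ite_eq_Wa hα a') ?_ hww,
    Fintype.card_fin, pairProb]
  intro α hα
  split_ifs with haa
  · subst haa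
    refine (sum_congr rfl fun w _ => ?_).trans (d.sum_ite_eq_Wa hα a)
    split_ifs <;> simp
  · exact sum_eq_zero fun w _ => by split_ifs <;> simp_all

lemma expect_subPlotAssignments_ite (w : Fin d.W) (s : Fin (d.M w)) (b : Bool) :
    𝔼 β ∈ d.subPlotAssignments w, (if β s = b then (1 : ℝ) else 0) = d.q w b := by
  rw [expect_apply_eq_div_card (g := fun b' => if b' = b then (1 : ℝ) else 0)
    (fun σ _ hβ => comp_perm_mem_completeRandomization hβ σ) (d.subPlotAssignments_nonempty w)
    (fun _ hβ => d.sum_ite_eq_Mb w hβ b) s, Fintype.card_fin, Design.q]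

/-- `α_w Ŷ_w(z)` as a function of the stage-(II) assignment `β` of whole-plot `w`, supposing
that `w` receives the A-level of `z`. -/
def scaledPlotMean (w : Fin d.W) (z : T) (β : Fin (d.M w) → Bool) : ℝ :=
  d.alpha w * ((d.Mb w z.2 : ℝ)⁻¹ * ∑ s, if β s = z.2 then d.Y w s z else 0)

lemma Uw_eq_ite_mul (ω : d.Assign) (w : Fin d.W) (z : T) :
    d.Uw ω w z = (if ω.1 w = z.1 then 1 else 0) * d.scaledPlotMean w z (ω.2 w) := by
  obtain ⟨a, b⟩ := z
  by_cases h : ω.1 w = a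
  · simp only [Design.Uw, Design.Yw, scaledPlotMean, Design.Yobs, Design.Z, h, Prod.mk.injEq,
      true_and, if_true, one_mul]
    congr 2
    exact sum_congr rfl fun s _ => by split_ifs with hb <;> simp [hb]
  · simp [Design.Uw, Design.Yw, Design.Z, h]

lemma Uw_mul_Uw_eq_zero (ω : d.Assign) (w : Fin d.W) {z z' : T} (hzz : z.1 ≠ z'.1) :
    d.Uw ω w z * d.Uw ω w z' = 0 := by
  rw [Uw_eq_ite_mul, Uw_eq_ite_mul]
  split_ifs with h h' <;> simp_all

lemma Yht_eq_inv_mul_sum_Uw (ω : d.Assign) (z : T) :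
    d.Yht ω z = (d.Wa z.1 : ℝ)⁻¹ * ∑ w, d.Uw ω w z := by
  have := d.N_ne_zero
  have := d.W_ne_zero
  have := d.Wa_ne_zero z.1
  rw [Design.Yht, mul_sum, mul_sum]
  refine sum_congr rfl fun w _ => ?_
  have : (d.M w : ℝ) ≠ 0 := by have := d.M_pos w; positivity
  have := d.Mb_ne_zero w z.2
  simp only [Design.Uw, Design.Yw, mul_sum]
  refine sum_congr rfl fun s _ => ?_
  split_ifs
  · simp only [Design.prob, Design.p, Design.q, Design.alpha]
    field_simp
  · simp

lemma sum_Uw_eq_mul_Yht (ω : d.Assign) (z : T) : ∑ w, d.Uw ω w z = d.Wa z.1 * d.Yht ω z := by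
  rw [Yht_eq_inv_mul_sum_Uw, mul_inv_cancel_left₀ (d.Wa_ne_zero z.1)]

lemma Ybar_eq_inv_mul_sum_U (z : T) : d.Ybar z = (d.W : ℝ)⁻¹ * ∑ w, d.U w z := by
  have := d.N_ne_zero
  have := d.W_ne_zero
  rw [Design.Ybar, mul_sum, mul_sum]
  refine sum_congr rfl fun w _ => ?_
  have : (d.M w : ℝ) ≠ 0 := by have := d.M_pos w; positivity
  simp only [Design.U, Design.alpha, Design.Ybarw]
  field_simp

lemma Sht_eq_sum_U (z z' : T) : d.Sht z z' = ((d.W : ℝ) - 1)⁻¹ *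
    (∑ w, d.U w z * d.U w z' - (d.W : ℝ)⁻¹ * ((∑ w, d.U w z) * (∑ w, d.U w z'))) := by
  have := d.W_ne_zero
  have hU : ∀ w z, d.alpha w * d.Ybarw w z = d.U w z := fun _ _ => rfl
  simp only [Design.Sht, hU, Ybar_eq_inv_mul_sum_U]
  congr 1
  simp only [sub_mul, mul_sub, sum_sub_distrib, ← sum_mul, ← mul_sum, sum_const, card_univ,
    Fintype.card_fin, nsmul_eq_mul]
  field_simp
  ring

lemma ShtHat_eq_of_mem {ω : d.Assign} (hω : ω ∈ d.Ω) {z z' : T} (hzz : z.1 = z'.1) :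
    d.ShtHat ω z z' = ((d.Wa z.1 : ℝ) - 1)⁻¹ *
      (∑ w, d.Uw ω w z * d.Uw ω w z' - d.Wa z.1 * (d.Yht ω z * d.Yht ω z')) := by
  have hα : ω.1 ∈ d.wholePlotAssignments := (mem_product.mp (d.Ω_eq ▸ hω)).1
  -- `Û_w` vanishes off the A-level `z.1`, so the restriction to `A_w = z.1` can be dropped
  have hterm : ∀ w, (if ω.1 w = z.1 then
        (d.alpha w * d.Yw ω w z - d.Yht ω z) * (d.alpha w * d.Yw ω w z' - d.Yht ω z') else 0) =
      d.Uw ω w z * d.Uw ω w z' - d.Yht ω z' * d.Uw ω w z - d.Yht ω z * d.Uw ω w z' +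
        (if ω.1 w = z.1 then 1 else 0) * (d.Yht ω z * d.Yht ω z') := fun w => by
    rw [← Design.Uw, ← Design.Uw, Uw_eq_ite_mul, Uw_eq_ite_mul, ← hzz]
    split_ifs <;> ring
  rw [Design.ShtHat, sum_congr rfl fun w _ => hterm w, sum_add_distrib, sum_sub_distrib,
    sum_sub_distrib, ← mul_sum, ← mul_sum, ← sum_mul, sum_Uw_eq_mul_Yht, sum_Uw_eq_mul_Yht,
    d.sum_ite_eq_Wa hα, ← hzz]
  ring

lemma expect_scaledPlotMean (w : Fin d.W) (z : T) :
    𝔼 β ∈ d.subPlotAssignments w, d.scaledPlotMean w z β = d.U w z := by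
  have : (d.M w : ℝ) ≠ 0 := by have := d.M_pos w; positivity
  have := d.Mb_ne_zero w z.2
  have hunit : ∀ s, 𝔼 β ∈ d.subPlotAssignments w, (if β s = z.2 then d.Y w s z else 0) =
      d.Y w s z * d.q w z.2 := fun s => by
    rw [← d.expect_subPlotAssignments_ite w s z.2, mul_expect]
    simp
  simp only [scaledPlotMean, ← mul_expect, expect_sum_comm, hunit, Design.U, Design.Ybarw,
    Design.q, ← sum_mul]
  field_simp

lemma expect_Uw (w : Fin d.W) (z : T) : 𝔼 ω ∈ d.Ω, d.Uw ω w z = d.p z.1 * d.U w z := by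
  simp only [Uw_eq_ite_mul]
  rw [d.expect_Ω_mul (fun α => if α w = z.1 then 1 else 0) w (d.scaledPlotMean w z),
    expect_wholePlotAssignments_ite, expect_scaledPlotMean]

lemma expect_Uw_mul_Uw {w w' : Fin d.W} (hww : w ≠ w') (z z' : T) :
    𝔼 ω ∈ d.Ω, d.Uw ω w z * d.Uw ω w' z' = d.pairProb z.1 z'.1 * (d.U w z * d.U w' z') := by
  have hsplit : ∀ ω : d.Assign, d.Uw ω w z * d.Uw ω w' z' =
      ((if ω.1 w = z.1 then 1 else 0) * (if ω.1 w' = z'.1 then 1 else 0)) *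
        (d.scaledPlotMean w z (ω.2 w) * d.scaledPlotMean w' z' (ω.2 w')) := fun ω => by
    rw [Uw_eq_ite_mul, Uw_eq_ite_mul, mul_mul_mul_comm]
  rw [expect_congr rfl fun ω _ => hsplit ω,
    d.expect_Ω_mul_mul (fun α => (if α w = z.1 then 1 else 0) * (if α w' = z'.1 then 1 else 0))
      hww (d.scaledPlotMean w z) (d.scaledPlotMean w' z'),
    expect_wholePlotAssignments_ite_mul_ite _ hww, expect_scaledPlotMean, expect_scaledPlotMean]

lemma expect_Yht (z : T) : 𝔼 ω ∈ d.Ω, d.Yht ω z = d.Ybar z := by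
  have := d.W_ne_zero
  have := d.Wa_ne_zero z.1
  simp only [Yht_eq_inv_mul_sum_Uw, ← mul_expect, expect_sum_comm, expect_Uw, ← mul_sum,
    Ybar_eq_inv_mul_sum_U, Design.p]
  field_simp

lemma expect_Yht_mul_Yht (z z' : T) :
    𝔼 ω ∈ d.Ω, d.Yht ω z * d.Yht ω z' = ((d.Wa z.1 : ℝ) * d.Wa z'.1)⁻¹ *
      (∑ w, 𝔼 ω ∈ d.Ω, d.Uw ω w z * d.Uw ω w z' +
        d.pairProb z.1 z'.1 * ((∑ w, d.U w z) * (∑ w, d.U w z') - ∑ w, d.U w z * d.U w z')) := by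
  calc 𝔼 ω ∈ d.Ω, d.Yht ω z * d.Yht ω z'
      = ((d.Wa z.1 : ℝ) * d.Wa z'.1)⁻¹ * ∑ w, ∑ w', 𝔼 ω ∈ d.Ω, d.Uw ω w z * d.Uw ω w' z' := by
        simp only [Yht_eq_inv_mul_sum_Uw, mul_mul_mul_comm, ← mul_inv, sum_mul_sum, ← mul_expect,
          expect_sum_comm]
    _ = ((d.Wa z.1 : ℝ) * d.Wa z'.1)⁻¹ * ∑ w, (𝔼 ω ∈ d.Ω, d.Uw ω w z * d.Uw ω w z' +
          ∑ w' ∈ univ.erase w, d.pairProb z.1 z'.1 * (d.U w z * d.U w' z')) := by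
        congr 1
        refine sum_congr rfl fun w _ => ?_
        rw [← add_sum_erase _ _ (mem_univ w)]
        exact congrArg _ (sum_congr rfl fun w' hw' =>
          d.expect_Uw_mul_Uw (ne_of_mem_erase hw').symm z z')
    _ = _ := by
        rw [sum_add_distrib, ← sum_sum_erase_mul, mul_sum]
        simp only [mul_sum]

lemma expect_Vht {z z' : T} (hzz : z.1 = z'.1) :
    𝔼 ω ∈ d.Ω, d.Vht ω z z' = (d.Wa z.1 : ℝ)⁻¹ * (((d.Wa z.1 : ℝ) - 1)⁻¹ *
      (∑ w, 𝔼 ω ∈ d.Ω, d.Uw ω w z * d.Uw ω w z' -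
        d.Wa z.1 * 𝔼 ω ∈ d.Ω, d.Yht ω z * d.Yht ω z')) :=
  calc 𝔼 ω ∈ d.Ω, d.Vht ω z z'
      = 𝔼 ω ∈ d.Ω, (d.Wa z.1 : ℝ)⁻¹ * (((d.Wa z.1 : ℝ) - 1)⁻¹ *
          (∑ w, d.Uw ω w z * d.Uw ω w z' - d.Wa z.1 * (d.Yht ω z * d.Yht ω z'))) :=
        expect_congr rfl fun ω hω => by
          rw [Design.Vht, of_apply, if_pos hzz, d.ShtHat_eq_of_mem hω hzz]
    _ = _ := by simp only [← mul_expect, expect_sub_distrib, expect_sum_comm]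

lemma expect_Vht_sub_cov (z z' : T) :
    d.expect (fun ω => d.Vht ω z z') - d.cov (fun ω => d.Yht ω z) (fun ω => d.Yht ω z') =
      (d.W : ℝ)⁻¹ * d.Sht z z' := by
  have := d.W_ne_zero
  have := d.W_sub_one_ne_zero
  have := d.Wa_ne_zero z.1
  have := d.Wa_ne_zero z'.1
  simp only [Design.cov, expect_eq_finset_expect, expect_Yht, Ybar_eq_inv_mul_sum_U, Sht_eq_sum_U]
  by_cases hzz : z.1 = z'.1
  · have := d.Wa_sub_one_ne_zero z.1
    rw [d.expect_Vht hzz, expect_Yht_mul_Yht, pairProb, ← hzz, if_pos rfl]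
    field_simp
    ring
  · have hV : 𝔼 ω ∈ d.Ω, d.Vht ω z z' = 0 :=
      expect_eq_zero fun ω _ => by simp [Design.Vht, hzz]
    have hD : ∑ w, 𝔼 ω ∈ d.Ω, d.Uw ω w z * d.Uw ω w z' = 0 :=
      sum_eq_zero fun w _ => expect_eq_zero fun ω _ => d.Uw_mul_Uw_eq_zero ω w hzz
    rw [hV, expect_Yht_mul_Yht, hD, pairProb, if_neg hzz]
    field_simp
    ring

lemma Sht_posSemidef : (Matrix.of d.Sht).PosSemidef := by
  let D : Matrix (Fin d.W) T ℝ := Matrix.of fun w z => d.alpha w * d.Ybarw w z - d.Ybar z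
  have hD : Matrix.of d.Sht = ((d.W : ℝ) - 1)⁻¹ • (Dᴴ * D) := by
    ext z z'
    simp [Design.Sht, D, Matrix.mul_apply, mul_sum]
  have hW : (2 : ℝ) ≤ d.W := by exact_mod_cast d.two_le_W
  rw [hD]
  exact (posSemidef_conjTranspose_mul_self D).smul (inv_nonneg.mpr (by linarith))

end Design

/-- Under 2² split-plot randomization, the covariance estimator
`V̂_ht` is conservative in expectation: `E[V̂_ht] − Cov(Ŷ_ht) = W⁻¹ S_ht` (entrywise),
and the matrix `W⁻¹ S_ht` is positive semi-definite. -/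
theorem vht_conservative (d : Design) :
    (∀ z z' : T,
      d.expect (fun ω => d.Vht ω z z')
          - d.cov (fun ω => d.Yht ω z) (fun ω => d.Yht ω z')
        = (d.W : ℝ)⁻¹ * d.Sht z z') ∧
    (Matrix.of fun z z' : T => (d.W : ℝ)⁻¹ * d.Sht z z').PosSemidef := by
  refine ⟨d.expect_Vht_sub_cov, ?_⟩
  have hW : (0 : ℝ) ≤ (d.W : ℝ)⁻¹ := by positivity
  convert d.Sht_posSemidef.smul hW using 1
  ext z z'
  simp

end SplitPlotPaper
end
end

section
/- Consider the additive covariate-adjusted regressions: the unit regression of Y_{ws} on the four treatment indicators 1(Z_{ws}=z), z∈T, and the covariate x_{ws} ('ols': unweighted; 'wls': weights p_{ws}(Z_{ws})^{-1}), and the aggregate regression of Û_w((A_w,b)) on the four indicators 1((A_w,b)=z) and v̂_w((A_w,b)), assuming each design matrix has full column rank. Let (β_†,F, γ_†) denote the coefficients of the treatment indicators and of the covariates under fitting scheme † ∈ {ols, wls, ag}. Then for every realization of the assignment: β_ols,F = Ŷ_sm − x̂_sm·γ_ols, β_wls,F = Ŷ_haj − x̂_haj·γ_wls, and β_ag,F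 = Ŷ_ht − x̂_ht·γ_ag. -/
open Finset Matrix Filter
open scoped Classical BigOperators

noncomputable section

namespace SplitPlotPaper

section AuxLS

open Sum

lemma key_lsCoef {ι Z J : Type*} [Fintype ι] [Fintype Z] [DecidableEq Z] [Fintype J] [DecidableEq J]
    (X : Matrix ι (Z ⊕ J) ℝ) (π y : ι → ℝ) (z : Z)
    (hdet : IsUnit (gram X π).det)
    (horth : ∀ z' : Z, z' ≠ z → gram X π (inl z) (inl z') = 0)
    (hn : gram X π (inl z) (inl z) ≠ 0) :
    lsCoef X π y (inl z)
      = (∑ i, π i * X i (inl z) * y i) / gram X π (inl z) (inl z)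
        - ∑ j, gram X π (inl z) (inr j) / gram X π (inl z) (inl z)
            * lsCoef X π y (inr j) := by
  have hNE : (gram X π).mulVec (lsCoef X π y) = fun k => ∑ i, π i * X i k * y i := by
    unfold lsCoef
    rw [Matrix.mulVec_mulVec, Matrix.mul_nonsing_inv _ hdet, Matrix.one_mulVec]
  have h := congrFun hNE (inl z)
  simp only [Matrix.mulVec, dotProduct, Fintype.sum_sum_type] at h
  rw [Finset.sum_eq_single z (fun b _ hb => by rw [horth b hb, zero_mul])
    (fun h' => absurd (Finset.mem_univ z) h')] at h
  have hsum : ∑ j, gram X π (inl z) (inr j) / gram X π (inl z) (inl z)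
      * lsCoef X π y (inr j)
      = (∑ j, gram X π (inl z) (inr j) * lsCoef X π y (inr j)) / gram X π (inl z) (inl z) := by
    rw [Finset.sum_div]
    exact Finset.sum_congr rfl fun j _ => by rw [div_mul_eq_mul_div]
  rw [hsum, div_sub_div_same, eq_div_iff hn]
  linear_combination h

lemma gram_diag_ne_zero {ι Z J : Type*} [Fintype ι] [Fintype Z] [DecidableEq Z]
    [Fintype J] [DecidableEq J]
    (X : Matrix ι (Z ⊕ J) ℝ) (π : ι → ℝ) (z : Z)
    (hπ : ∀ i, 0 < π i)
    (hX : ∀ i, X i (inl z) = 0 ∨ X i (inl z) = 1)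
    (hdet : IsUnit (gram X π).det) :
    gram X π (inl z) (inl z) ≠ 0 := by
  intro h0
  have hnn : ∀ i ∈ Finset.univ, (0:ℝ) ≤ π i * X i (inl z) * X i (inl z) := by
    intro i _
    rcases hX i with h | h <;> simp [h] <;> nlinarith [hπ i]
  have hall := (Finset.sum_eq_zero_iff_of_nonneg hnn).mp h0
  have hz : ∀ i, X i (inl z) = 0 := by
    intro i
    rcases hX i with h | h
    · exact h
    · exfalso
      have := hall i (Finset.mem_univ i)
      rw [h] at this
      nlinarith [hπ i]
  have hrow : ∀ k, gram X π (inl z) k = 0 := by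
    intro k
    refine Finset.sum_eq_zero fun i _ => by rw [hz i, mul_zero, zero_mul]
  have : (gram X π).det = 0 := Matrix.det_eq_zero_of_row_eq_zero (inl z) hrow
  rw [this] at hdet
  exact (not_isUnit_zero : ¬ IsUnit (0:ℝ)) hdet

end AuxLS

namespace Design

variable (d : Design)

lemma W_posR : 0 < (d.W : ℝ) := by
  have h : 0 < d.W := lt_of_lt_of_le two_pos (d.hW0.trans (Nat.le_add_right _ _))
  exact_mod_cast h

lemma Wa_posR (a : Bool) : 0 < (d.Wa a : ℝ) := by
  have h : 0 < d.Wa a := by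
    cases a
    · simpa [Design.Wa] using lt_of_lt_of_le two_pos d.hW0
    · simpa [Design.Wa] using lt_of_lt_of_le two_pos d.hW1
  exact_mod_cast h

lemma M_posR (w : Fin d.W) : 0 < (d.M w : ℝ) := by
  have h : 0 < d.M w := lt_of_lt_of_le two_pos ((d.hM0 w).trans (Nat.le_add_right _ _))
  exact_mod_cast h

lemma Mb_posR (w : Fin d.W) (b : Bool) : 0 < (d.Mb w b : ℝ) := by
  have h : 0 < d.Mb w b := by
    cases b
    · simpa [Design.Mb] using lt_of_lt_of_le two_pos (d.hM0 w)
    · simpa [Design.Mb] using lt_of_lt_of_le two_pos (d.hM1 w)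
  exact_mod_cast h

lemma N_posR : 0 < (d.N : ℝ) := by
  have hW : 0 < d.W := lt_of_lt_of_le two_pos (d.hW0.trans (Nat.le_add_right _ _))
  have h : 0 < d.N := by
    rw [Design.N]
    exact Finset.sum_pos
      (fun w _ => lt_of_lt_of_le two_pos ((d.hM0 w).trans (Nat.le_add_right _ _)))
      ⟨⟨0, hW⟩, Finset.mem_univ _⟩
  exact_mod_cast h

lemma prob_posR (w : Fin d.W) (z : T) : 0 < d.prob w z := by
  rw [Design.prob, Design.p, Design.q]
  exact mul_pos (div_pos (d.Wa_posR z.1) d.W_posR) (div_pos (d.Mb_posR w z.2) (d.M_posR w))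

lemma cardA (ω : d.Assign) (hω : ω ∈ d.Ω) (a : Bool) :
    ((Finset.univ.filter fun w => ω.1 w = a).card : ℝ) = (d.Wa a : ℝ) := by
  simp only [Design.Ω, Finset.mem_filter, Finset.mem_univ, true_and] at hω
  have htrue := hω.1
  norm_cast
  cases a
  · have hsplit := Finset.card_filter_add_card_filter_not
      (s := (Finset.univ : Finset (Fin d.W))) (p := fun w => ω.1 w = true)
    have hneg : (Finset.univ.filter fun w => ¬ ω.1 w = true)
        = (Finset.univ.filter fun w => ω.1 w = false) := by
      apply Finset.filter_congr; intro w _; simp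
    rw [hneg, htrue, Finset.card_univ] at hsplit
    simp only [Fintype.card_fin] at hsplit
    have hWdef : d.W = d.W0 + d.W1 := rfl
    simp only [Design.Wa, Bool.false_eq_true, if_false]
    omega
  · simpa [Design.Wa] using htrue

lemma unit_sum (f : d.Idx → ℝ) : ∑ i : d.Idx, f i = ∑ w, ∑ s, f ⟨w, s⟩ := by
  rw [← Finset.univ_sigma_univ, Finset.sum_sigma]

lemma ag_sum (ω : d.Assign) (z : T) (g : d.AgIdx → ℝ) :
    (∑ i : d.AgIdx, (if (ω.1 i.1, i.2) = z then 1 else 0) * g i)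
      = ∑ w, (if ω.1 w = z.1 then g (w, z.2) else 0) := by
  rw [Fintype.sum_prod_type]
  refine Finset.sum_congr rfl fun w _ => ?_
  rcases z with ⟨a, b0⟩
  by_cases ha : ω.1 w = a
  · cases b0 <;> simp [ha, Prod.ext_iff]
  · cases b0 <;> simp [ha, Prod.ext_iff]

lemma ag_ht (ω : d.Assign) (z : T) (f : (w : Fin d.W) → Fin (d.M w) → ℝ) :
    (d.N : ℝ)⁻¹ * ∑ w, ∑ s, (if d.Z ω w s = z then (d.prob w z)⁻¹ * f w s else 0)
      = (d.Wa z.1 : ℝ)⁻¹ * ∑ w, (if ω.1 w = z.1 then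
          d.alpha w * ((d.Mb w z.2 : ℝ)⁻¹ * ∑ s, (if d.Z ω w s = z then f w s else 0)) else 0) := by
  rw [Finset.mul_sum, Finset.mul_sum]
  refine Finset.sum_congr rfl fun w _ => ?_
  by_cases ha : ω.1 w = z.1
  · rw [if_pos ha]
    have hS : (∑ s, if d.Z ω w s = z then (d.prob w z)⁻¹ * f w s else 0)
        = (d.prob w z)⁻¹ * ∑ s, (if d.Z ω w s = z then f w s else 0) := by
      rw [Finset.mul_sum]
      exact Finset.sum_congr rfl fun s _ => by rw [mul_ite, mul_zero]
    rw [hS, Design.alpha, Design.prob, Design.p, Design.q]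
    have hW := d.W_posR; have hWa := d.Wa_posR z.1; have hM := d.M_posR w
    have hMb := d.Mb_posR w z.2; have hN := d.N_posR
    field_simp
  · have hzero : ∀ s, d.Z ω w s ≠ z := fun s h => ha (by rw [← h]; rfl)
    rw [if_neg ha, Finset.sum_eq_zero fun s _ => if_neg (hzero s)]
    simp

end Design

/-- Additive covariate-adjusted regressions.  With full-column-rank
design matrices (expressed via invertibility of the Gram matrices), the coefficients of
the treatment indicators satisfy `β_ols,F = Ŷ_sm − x̂_sm γ_ols`,
`β_wls,F = Ŷ_haj − x̂_haj γ_wls`, and `β_ag,F = Ŷ_ht − x̂_ht γ_ag`. -/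
theorem additive_adjustment (d : Design) {J : ℕ}
    (x : (w : Fin d.W) → Fin (d.M w) → Fin J → ℝ)
    (hx : ∀ j, (∑ w, ∑ s, x w s j) = 0)
    (ω : d.Assign) (hω : ω ∈ d.Ω)
    (hols : IsUnit (gram (d.DunitF x ω) (fun _ => 1)).det)
    (hwls : IsUnit (gram (d.DunitF x ω) (d.wgt ω)).det)
    (hag : IsUnit (gram (d.DagF x ω) (fun _ => 1)).det) :
    (∀ z : T,
      lsCoef (d.DunitF x ω) (fun _ => 1) (d.Yv ω) (Sum.inl z)
        = d.Ysm ω z - ∑ j, d.xsm x ω z j *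
            lsCoef (d.DunitF x ω) (fun _ => 1) (d.Yv ω) (Sum.inr j)) ∧
    (∀ z : T,
      lsCoef (d.DunitF x ω) (d.wgt ω) (d.Yv ω) (Sum.inl z)
        = d.Yhaj ω z - ∑ j, d.xhaj x ω z j *
            lsCoef (d.DunitF x ω) (d.wgt ω) (d.Yv ω) (Sum.inr j)) ∧
    (∀ z : T,
      lsCoef (d.DagF x ω) (fun _ => 1) (d.Uag ω) (Sum.inl z)
        = d.Yht ω z - ∑ j, d.xht x ω z j *
            lsCoef (d.DagF x ω) (fun _ => 1) (d.Uag ω) (Sum.inr j)) := by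
  have hN : (d.N : ℝ) ≠ 0 := ne_of_gt d.N_posR
  refine ⟨?_, ?_, ?_⟩
  · -- OLS
    intro z
    have hX01 : ∀ i : d.Idx, d.DunitF x ω i (Sum.inl z) = 0 ∨ d.DunitF x ω i (Sum.inl z) = 1 := by
      intro i; by_cases h : d.Z ω i.1 i.2 = z <;> simp [Design.DunitF, h]
    have horth : ∀ z' : T, z' ≠ z →
        gram (d.DunitF x ω) (fun _ => 1) (Sum.inl z) (Sum.inl z') = 0 := by
      intro z' hz'
      refine Finset.sum_eq_zero fun i _ => ?_
      by_cases h : d.Z ω i.1 i.2 = z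
      · have h2 : d.Z ω i.1 i.2 ≠ z' := by rw [h]; exact fun hh => hz' hh.symm
        simp [Design.DunitF, h, h2, Ne.symm hz']
      · simp [Design.DunitF, h]
    have hn := gram_diag_ne_zero (d.DunitF x ω) (fun _ => 1) z (fun _ => one_pos) hX01 hols
    rw [key_lsCoef _ _ _ z hols horth hn]
    have hb : (∑ i : d.Idx, (1:ℝ) * d.DunitF x ω i (Sum.inl z) * d.Yv ω i)
        = ∑ w, ∑ s, (if d.Z ω w s = z then d.Yobs ω w s else 0) := by
      rw [d.unit_sum]
      refine Finset.sum_congr rfl fun w _ => Finset.sum_congr rfl fun s _ => ?_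
      by_cases h : d.Z ω w s = z <;> simp [Design.DunitF, Design.Yv, h]
    have hden : gram (d.DunitF x ω) (fun _ => 1) (Sum.inl z) (Sum.inl z)
        = ∑ w, ∑ s, (if d.Z ω w s = z then (1:ℝ) else 0) := by
      show (∑ i : d.Idx, (1:ℝ) * d.DunitF x ω i (Sum.inl z) * d.DunitF x ω i (Sum.inl z)) = _
      rw [d.unit_sum]
      refine Finset.sum_congr rfl fun w _ => Finset.sum_congr rfl fun s _ => ?_
      by_cases h : d.Z ω w s = z <;> simp [Design.DunitF, h]
    have hgj : ∀ j, gram (d.DunitF x ω) (fun _ => 1) (Sum.inl z) (Sum.inr j)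
        = ∑ w, ∑ s, (if d.Z ω w s = z then x w s j else 0) := by
      intro j
      show (∑ i : d.Idx, (1:ℝ) * d.DunitF x ω i (Sum.inl z) * d.DunitF x ω i (Sum.inr j)) = _
      rw [d.unit_sum]
      refine Finset.sum_congr rfl fun w _ => Finset.sum_congr rfl fun s _ => ?_
      by_cases h : d.Z ω w s = z <;> simp [Design.DunitF, h]
    congr 1
    · rw [hb, hden]; rfl
    · refine Finset.sum_congr rfl fun j _ => ?_
      rw [hgj j, hden]; rfl
  · -- WLS
    intro z
    have hπ : ∀ i : d.Idx, 0 < d.wgt ω i := fun i => inv_pos.mpr (d.prob_posR i.1 _)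
    have hX01 : ∀ i : d.Idx, d.DunitF x ω i (Sum.inl z) = 0 ∨ d.DunitF x ω i (Sum.inl z) = 1 := by
      intro i; by_cases h : d.Z ω i.1 i.2 = z <;> simp [Design.DunitF, h]
    have horth : ∀ z' : T, z' ≠ z →
        gram (d.DunitF x ω) (d.wgt ω) (Sum.inl z) (Sum.inl z') = 0 := by
      intro z' hz'
      refine Finset.sum_eq_zero fun i _ => ?_
      by_cases h : d.Z ω i.1 i.2 = z
      · have h2 : d.Z ω i.1 i.2 ≠ z' := by rw [h]; exact fun hh => hz' hh.symm
        simp [Design.DunitF, h, h2, Ne.symm hz']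
      · simp [Design.DunitF, h]
    have hn := gram_diag_ne_zero (d.DunitF x ω) (d.wgt ω) z hπ hX01 hwls
    rw [key_lsCoef _ _ _ z hwls horth hn]
    have hb : (∑ i : d.Idx, d.wgt ω i * d.DunitF x ω i (Sum.inl z) * d.Yv ω i)
        = ∑ w, ∑ s, (if d.Z ω w s = z then (d.prob w z)⁻¹ * d.Yobs ω w s else 0) := by
      rw [d.unit_sum]
      refine Finset.sum_congr rfl fun w _ => Finset.sum_congr rfl fun s _ => ?_
      by_cases h : d.Z ω w s = z <;> simp [Design.DunitF, Design.Yv, Design.wgt, h]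
    have hden : gram (d.DunitF x ω) (d.wgt ω) (Sum.inl z) (Sum.inl z)
        = ∑ w, ∑ s, (if d.Z ω w s = z then (d.prob w z)⁻¹ else 0) := by
      show (∑ i : d.Idx, d.wgt ω i * d.DunitF x ω i (Sum.inl z) * d.DunitF x ω i (Sum.inl z)) = _
      rw [d.unit_sum]
      refine Finset.sum_congr rfl fun w _ => Finset.sum_congr rfl fun s _ => ?_
      by_cases h : d.Z ω w s = z <;> simp [Design.DunitF, Design.wgt, h]
    have hgj : ∀ j, gram (d.DunitF x ω) (d.wgt ω) (Sum.inl z) (Sum.inr j)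
        = ∑ w, ∑ s, (if d.Z ω w s = z then (d.prob w z)⁻¹ * x w s j else 0) := by
      intro j
      show (∑ i : d.Idx, d.wgt ω i * d.DunitF x ω i (Sum.inl z) * d.DunitF x ω i (Sum.inr j)) = _
      rw [d.unit_sum]
      refine Finset.sum_congr rfl fun w _ => Finset.sum_congr rfl fun s _ => ?_
      by_cases h : d.Z ω w s = z <;> simp [Design.DunitF, Design.wgt, h]
    have hY : d.Yhaj ω z
        = (∑ w, ∑ s, (if d.Z ω w s = z then (d.prob w z)⁻¹ * d.Yobs ω w s else 0))
          / (∑ w, ∑ s, (if d.Z ω w s = z then (d.prob w z)⁻¹ else 0)) :=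
      mul_div_mul_left _ _ (inv_ne_zero hN)
    have hxj : ∀ j, d.xhaj x ω z j
        = (∑ w, ∑ s, (if d.Z ω w s = z then (d.prob w z)⁻¹ * x w s j else 0))
          / (∑ w, ∑ s, (if d.Z ω w s = z then (d.prob w z)⁻¹ else 0)) :=
      fun j => mul_div_mul_left _ _ (inv_ne_zero hN)
    congr 1
    · rw [hb, hden, hY]
    · refine Finset.sum_congr rfl fun j _ => ?_
      rw [hgj j, hden, hxj j]
  · -- aggregate
    intro z
    have hX01 : ∀ i : d.AgIdx, d.DagF x ω i (Sum.inl z) = 0 ∨ d.DagF x ω i (Sum.inl z) = 1 := by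
      intro i; by_cases h : (ω.1 i.1, i.2) = z <;> simp [Design.DagF, h]
    have horth : ∀ z' : T, z' ≠ z →
        gram (d.DagF x ω) (fun _ => 1) (Sum.inl z) (Sum.inl z') = 0 := by
      intro z' hz'
      refine Finset.sum_eq_zero fun i _ => ?_
      by_cases h : (ω.1 i.1, i.2) = z
      · have h2 : (ω.1 i.1, i.2) ≠ z' := by rw [h]; exact fun hh => hz' hh.symm
        simp [Design.DagF, h, h2, Ne.symm hz']
      · simp [Design.DagF, h]
    have hn := gram_diag_ne_zero (d.DagF x ω) (fun _ => 1) z (fun _ => one_pos) hX01 hag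
    rw [key_lsCoef _ _ _ z hag horth hn]
    have hb : (∑ i : d.AgIdx, (1:ℝ) * d.DagF x ω i (Sum.inl z) * d.Uag ω i)
        = ∑ w, (if ω.1 w = z.1 then d.Uw ω w z else 0) := by
      calc (∑ i : d.AgIdx, (1:ℝ) * d.DagF x ω i (Sum.inl z) * d.Uag ω i)
          = ∑ i : d.AgIdx, (if (ω.1 i.1, i.2) = z then 1 else 0) * d.Uag ω i := by
            refine Finset.sum_congr rfl fun i _ => by rw [one_mul]; rfl
        _ = ∑ w, (if ω.1 w = z.1 then d.Uag ω (w, z.2) else 0) := d.ag_sum ω z _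
        _ = ∑ w, (if ω.1 w = z.1 then d.Uw ω w z else 0) := by
            refine Finset.sum_congr rfl fun w _ => ?_
            by_cases ha : ω.1 w = z.1
            · rw [if_pos ha, if_pos ha]
              show d.Uw ω w (ω.1 w, z.2) = d.Uw ω w z
              rw [ha, Prod.mk.eta]
            · rw [if_neg ha, if_neg ha]
    have hden : gram (d.DagF x ω) (fun _ => 1) (Sum.inl z) (Sum.inl z) = (d.Wa z.1 : ℝ) := by
      calc gram (d.DagF x ω) (fun _ => 1) (Sum.inl z) (Sum.inl z)
          = ∑ i : d.AgIdx, (if (ω.1 i.1, i.2) = z then 1 else 0)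
              * (if (ω.1 i.1, i.2) = z then (1:ℝ) else 0) := by
            refine Finset.sum_congr rfl fun i _ => ?_
            by_cases h : (ω.1 i.1, i.2) = z <;> simp [Design.DagF, h]
        _ = ∑ w, (if ω.1 w = z.1 then (if (ω.1 w, z.2) = z then (1:ℝ) else 0) else 0) :=
            d.ag_sum ω z _
        _ = ∑ w, (if ω.1 w = z.1 then (1:ℝ) else 0) := by
            refine Finset.sum_congr rfl fun w _ => ?_
            by_cases ha : ω.1 w = z.1
            · rw [if_pos ha, if_pos ha, if_pos (by rw [ha, Prod.mk.eta])]
            · rw [if_neg ha, if_neg ha]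
        _ = (d.Wa z.1 : ℝ) := by rw [Finset.sum_boole]; exact d.cardA ω hω z.1
    have hgj : ∀ j, gram (d.DagF x ω) (fun _ => 1) (Sum.inl z) (Sum.inr j)
        = ∑ w, (if ω.1 w = z.1 then d.vw x ω w z j else 0) := by
      intro j
      calc gram (d.DagF x ω) (fun _ => 1) (Sum.inl z) (Sum.inr j)
          = ∑ i : d.AgIdx, (if (ω.1 i.1, i.2) = z then 1 else 0)
              * d.vw x ω i.1 (ω.1 i.1, i.2) j := by
            refine Finset.sum_congr rfl fun i _ => by rw [one_mul]; rfl
        _ = ∑ w, (if ω.1 w = z.1 then d.vw x ω w (ω.1 w, z.2) j else 0) := d.ag_sum ω z _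
        _ = ∑ w, (if ω.1 w = z.1 then d.vw x ω w z j else 0) := by
            refine Finset.sum_congr rfl fun w _ => ?_
            by_cases ha : ω.1 w = z.1
            · rw [if_pos ha, if_pos ha, ha, Prod.mk.eta]
            · rw [if_neg ha, if_neg ha]
    have hY : d.Yht ω z
        = (d.Wa z.1 : ℝ)⁻¹ * ∑ w, (if ω.1 w = z.1 then d.Uw ω w z else 0) :=
      d.ag_ht ω z fun w s => d.Yobs ω w s
    have hxj : ∀ j, d.xht x ω z j
        = (d.Wa z.1 : ℝ)⁻¹ * ∑ w, (if ω.1 w = z.1 then d.vw x ω w z j else 0) :=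
      fun j => d.ag_ht ω z fun w s => x w s j
    congr 1
    · rw [hb, hden, hY, inv_mul_eq_div]
    · refine Finset.sum_congr rfl fun j _ => ?_
      rw [hgj j, hden, hxj j, inv_mul_eq_div]


end SplitPlotPaper
end
end
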